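/- arXiv:2405.12611 — 2 statements merged into one kernel-verified Lean document; each statement's English description precedes it below -/
import Mathlib

section
/- Let K be a field, let q, α, β, γ, δ, c₁, c₂ be nonzero elements of K, and let k, l, t be integers such that α·β = c₁·q^(k−1). Define P_g(X) = (1 − γX)(1 − δX) and P_{g*}(X) = (1 − c₂⁻¹γX)(1 − c₂⁻¹δX). Assume P_{g*}(α·q^(−(l+t))) ≠ 0 and P_g(β⁻¹·q^t) ≠ 0. Then (P_g(q^t·α⁻¹) / P_{g*}(α·q^(−(l+t)))) · ∏_{ρ ∈ {α, β}} ∏_{σ ∈ {c₂⁻¹γ, c₂⁻¹δ}} (1 − ρ·σ·q^(−(l+t))) = (P_{g*}(q^(−(l+t))·β) / P_g(β⁻¹·q^t)) · ∏_{ρ ∈ {c₁⁻¹α, c₁⁻¹β}} ∏_{σ ∈ {γ, δ}} (1 − ρ·σ·q^(−(k−1−t))). -/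
/-- **Equality of modified Euler factors at `p`** (Proposition `modifiedeulerfactor`).
`α, β` are the Frobenius roots of `f` at `p` (so `α·β = c₁·q^(k−1)` with `c₁ = ψ(p)`, `q = p`),
`γ, δ` are the Frobenius roots of `g` at `p` (`c₂ = ε(p)`); `Pg` is `P_p(g, ·)`, `Pgstar` is
`P_p(g*, ·)`. The quadruple product over `{α,β} × {c₂⁻¹γ, c₂⁻¹δ}` is `P_p(f, g*, l+t)` and the
one over `{c₁⁻¹α, c₁⁻¹β} × {γ, δ}` is `P_p(f*, g, k−1−t)`. -/
theorem modified_euler_factors_equal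
    {K : Type*} [Field K] (q α β γ δ c₁ c₂ : K)
    (hq : q ≠ 0) (hα : α ≠ 0) (hβ : β ≠ 0) (hγ : γ ≠ 0) (hδ : δ ≠ 0)
    (hc₁ : c₁ ≠ 0) (hc₂ : c₂ ≠ 0)
    (k l t : ℤ)
    (hfrob : α * β = c₁ * q ^ (k - 1))
    (Pg Pgstar : K → K)
    (hPg : ∀ X : K, Pg X = (1 - γ * X) * (1 - δ * X))
    (hPgstar : ∀ X : K, Pgstar X = (1 - c₂⁻¹ * γ * X) * (1 - c₂⁻¹ * δ * X))
    (h₁ : Pgstar (α * q ^ (-(l + t))) ≠ 0)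
    (h₂ : Pg (β⁻¹ * q ^ t) ≠ 0) :
    Pg (q ^ t * α⁻¹) / Pgstar (α * q ^ (-(l + t))) *
      ((1 - α * (c₂⁻¹ * γ) * q ^ (-(l + t))) * (1 - α * (c₂⁻¹ * δ) * q ^ (-(l + t))) *
        ((1 - β * (c₂⁻¹ * γ) * q ^ (-(l + t))) * (1 - β * (c₂⁻¹ * δ) * q ^ (-(l + t))))) =
    Pgstar (q ^ (-(l + t)) * β) / Pg (β⁻¹ * q ^ t) *
      ((1 - c₁⁻¹ * α * γ * q ^ (-(k - 1 - t))) * (1 - c₁⁻¹ * α * δ * q ^ (-(k - 1 - t))) *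
        ((1 - c₁⁻¹ * β * γ * q ^ (-(k - 1 - t))) * (1 - c₁⁻¹ * β * δ * q ^ (-(k - 1 - t))))) := by
  have hC : q ^ (-(k - 1 - t)) = q ^ t * c₁ * α⁻¹ * β⁻¹ := by
    have hk : q ^ (k - 1) = c₁⁻¹ * (α * β) := by
      field_simp [hfrob]
      rw [hfrob]; ring
    have : q ^ (-(k - 1 - t)) = q ^ t * (q ^ (k - 1))⁻¹ := by
      rw [← zpow_neg, ← zpow_add₀ hq]
      ring_nf
    rw [this, hk]
    field_simp
  have e1 : (1 - α * (c₂⁻¹ * γ) * q ^ (-(l + t))) * (1 - α * (c₂⁻¹ * δ) * q ^ (-(l + t))) *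
      ((1 - β * (c₂⁻¹ * γ) * q ^ (-(l + t))) * (1 - β * (c₂⁻¹ * δ) * q ^ (-(l + t)))) =
      Pgstar (α * q ^ (-(l + t))) * Pgstar (q ^ (-(l + t)) * β) := by
    rw [hPgstar, hPgstar]; ring
  have e2 : (1 - c₁⁻¹ * α * γ * q ^ (-(k - 1 - t))) * (1 - c₁⁻¹ * α * δ * q ^ (-(k - 1 - t))) *
      ((1 - c₁⁻¹ * β * γ * q ^ (-(k - 1 - t))) * (1 - c₁⁻¹ * β * δ * q ^ (-(k - 1 - t)))) =
      Pg (β⁻¹ * q ^ t) * Pg (q ^ t * α⁻¹) := by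
    have f1 : c₁⁻¹ * α * γ * q ^ (-(k - 1 - t)) = γ * (β⁻¹ * q ^ t) := by
      rw [hC]; field_simp; try ring
    have f2 : c₁⁻¹ * α * δ * q ^ (-(k - 1 - t)) = δ * (β⁻¹ * q ^ t) := by
      rw [hC]; field_simp; try ring
    have f3 : c₁⁻¹ * β * γ * q ^ (-(k - 1 - t)) = γ * (q ^ t * α⁻¹) := by
      rw [hC]; field_simp; try ring
    have f4 : c₁⁻¹ * β * δ * q ^ (-(k - 1 - t)) = δ * (q ^ t * α⁻¹) := by
      rw [hC]; field_simp; try ring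
    rw [f1, f2, f3, f4, hPg, hPg]
  have cancel : ∀ x y d : K, d ≠ 0 → x / d * (d * y) = x * y := by
    intro x y d hd
    field_simp
  rw [e1, e2, cancel _ _ _ h₁, cancel _ _ _ h₂]
  ring
end

section
/- Let A be an integral domain, p a prime number, and s a natural number. The element u = (1+T)^(p^s) of the formal power series ring A[[T]] is a unit, and the A-algebra homomorphism from the Laurent polynomial ring A[X, X⁻¹] to A[[T]] sending X to u is injective; equivalently, for every nonzero Laurent polynomial Q ∈ A[X, X⁻¹], the evaluation Q(u) ∈ A[[T]] is nonzero. -/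
/-- Evaluation of Laurent polynomials at a unit `u` of the power series ring: the `A`-algebra
homomorphism `A[X, X⁻¹] → A[[T]]` sending `X` to `u` (it sends `X^n` to `u^n` for all `n : ℤ`,
negative powers of `u` being taken in the unit group). -/
noncomputable def laurentEvalUnit {A : Type*} [CommRing A] (u : (PowerSeries A)ˣ) :
    LaurentPolynomial A →ₐ[A] PowerSeries A :=
  AddMonoidAlgebra.lift A (PowerSeries A) ℤ
    ((Units.coeHom (PowerSeries A)).comp (zpowersHom (PowerSeries A)ˣ u))

theorem laurentEvalUnit_T {A : Type*} [CommRing A] (u : (PowerSeries A)ˣ) (n : ℤ) :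
    laurentEvalUnit u (LaurentPolynomial.T n) = (u ^ n : (PowerSeries A)ˣ) := by
  rw [laurentEvalUnit, LaurentPolynomial.T, AddMonoidAlgebra.lift_single]
  simp

theorem laurentEvalUnit_toLaurent {A : Type*} [CommRing A] (u : (PowerSeries A)ˣ)
    (P : Polynomial A) :
    laurentEvalUnit u (Polynomial.toLaurent P) = Polynomial.aeval (u : PowerSeries A) P := by
  have h : (laurentEvalUnit u).comp Polynomial.toLaurentAlg =
      Polynomial.aeval (u : PowerSeries A) := by
    apply Polynomial.algHom_ext
    simp [Polynomial.toLaurentAlg_apply, Polynomial.toLaurent_X, laurentEvalUnit_T]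
  calc laurentEvalUnit u (Polynomial.toLaurent P)
      = ((laurentEvalUnit u).comp Polynomial.toLaurentAlg) P := by
        simp [Polynomial.toLaurentAlg_apply]
    _ = Polynomial.aeval (u : PowerSeries A) P := by rw [h]

/-- **Lemma `linearindep`.** Let `A` be an integral domain, `p` a prime and `s : ℕ`. The
element `u = (1+T)^(p^s)` of `A[[T]]` is a unit, and the `A`-algebra homomorphism from the
Laurent polynomial ring `A[X, X⁻¹]` to `A[[T]]` sending `X` to `u` is injective; equivalently,
every nonzero Laurent polynomial `Q` evaluates to a nonzero element `Q(u)` of `A[[T]]`. -/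
theorem laurent_eval_at_one_add_T_pow_injective
    {A : Type*} [CommRing A] [IsDomain A] (p : ℕ) (hp : p.Prime) (s : ℕ) :
    IsUnit ((1 + PowerSeries.X : PowerSeries A) ^ p ^ s) ∧
    ∀ u : (PowerSeries A)ˣ, (u : PowerSeries A) = (1 + PowerSeries.X) ^ p ^ s →
      (laurentEvalUnit u (LaurentPolynomial.T 1) = (u : PowerSeries A) ∧
        Function.Injective (laurentEvalUnit u)) := by
  have hN : p ^ s ≠ 0 := pow_ne_zero s hp.pos.ne'
  refine ⟨?_, ?_⟩
  · rw [PowerSeries.isUnit_iff_constantCoeff]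
    simp
  intro u hu
  refine ⟨by rw [laurentEvalUnit_T, zpow_one], ?_⟩
  rw [injective_iff_map_eq_zero]
  intro Q hQ
  obtain ⟨n, P, hP⟩ := Q.exists_T_pow
  -- the polynomial q = (1+X)^(p^s) in A[X]
  set q : Polynomial A := (1 + Polynomial.X) ^ p ^ s with hq
  have hqcoe : ((q : Polynomial A) : PowerSeries A) = (u : PowerSeries A) := by
    rw [hu, hq]; push_cast; ring
  have haeval : Polynomial.aeval (u : PowerSeries A) P = ((P.comp q : Polynomial A) : PowerSeries A) := by
    rw [← hqcoe]
    have := Polynomial.aeval_algHom_apply (Polynomial.coeToPowerSeries.algHom (R := A) A) q P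
    simp only [Polynomial.coeToPowerSeries.algHom_apply, Algebra.algebraMap_self,
      PowerSeries.map_id, id_eq, id] at this
    rw [this, Polynomial.aeval_def, Polynomial.algebraMap_eq]
    rfl
  have hPzero : P = 0 := by
    by_contra hPne
    have hmonic : q.Monic := ((Polynomial.monic_X.add_of_right (by simp)).pow _)
    have hdeg : q.natDegree = p ^ s := by
      rw [hq, Polynomial.natDegree_pow]
      have : (1 + Polynomial.X : Polynomial A).natDegree = 1 := by
        rw [add_comm]; exact Polynomial.natDegree_X_add_C 1
      rw [this, mul_one]
    have hcomp0 : P.comp q = 0 := by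
      have h1 : laurentEvalUnit u (Polynomial.toLaurent P) = 0 := by
        rw [hP, map_mul, hQ, zero_mul]
      rw [laurentEvalUnit_toLaurent, haeval] at h1
      exact_mod_cast (Polynomial.coe_eq_zero_iff).mp h1
    have := Polynomial.leadingCoeff_comp (p := P) (q := q) (by rw [hdeg]; exact hN)
    rw [hcomp0, Polynomial.leadingCoeff_zero, hmonic.leadingCoeff, one_pow, mul_one] at this
    exact hPne (Polynomial.leadingCoeff_eq_zero.mp this.symm)
  have : Q * LaurentPolynomial.T n = 0 := by
    rw [← hP, hPzero, map_zero]
  rcases mul_eq_zero.mp this with h | h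
  · exact h
  · exact absurd h (LaurentPolynomial.isUnit_T n).ne_zero
end
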